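/- Let d > 1 be odd and let (M,b) be a linear constraint system over ℤ_d of magic-pentagram form: variables x_1,…,x_10 with constraints a_1x_1+a_2x_2+a_3x_3+a_4x_4=b_1, a_1'x_1+a_5x_5+a_6x_6+a_7x_7=b_2, a_2'x_2+a_5'x_5+a_8x_8+a_9x_9=b_3, a_3'x_3+a_6'x_6+a_8'x_8+a_{10}x_{10}=b_4, a_4'x_4+a_7'x_7+a_9'x_9+a_{10}'x_{10}=b_5, where every coefficient a_i, a_i' lies in {1, −1} ⊂ ℤ_d. Then (M,b) admits a quantum solution on some nonzero complex Hilbert space if and only if it has a classical solution. -/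
import Mathlib

/-- ω = exp(2πi/d). -/
noncomputable def rootOfUnity (d : ℕ) : ℂ := Complex.exp (2 * Real.pi * Complex.I / d)

/-- A quantum solution to the linear constraint system `(M, b)` over `ℤ_d` on a complex
Hilbert space `H`: bounded operators `A i` with `A i ^ d = 1`, commuting whenever two
variables appear in a common constraint, and with `∏ j, A j ^ M i j = ω ^ b i • 1` for
every row `i`. -/
def IsQuantumSolution (d : ℕ) {m n : ℕ} (M : Matrix (Fin m) (Fin n) (ZMod d))
    (b : Fin m → ZMod d) {H : Type} [NormedAddCommGroup H] [InnerProductSpace ℂ H]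
    (A : Fin n → H →L[ℂ] H) : Prop :=
  (∀ i, A i ^ d = 1) ∧
  (∀ j k : Fin n, (∃ i, M i j ≠ 0 ∧ M i k ≠ 0) → Commute (A j) (A k)) ∧
  (∀ i : Fin m, (List.ofFn fun j => A j ^ (M i j).val).prod
      = rootOfUnity d ^ (b i).val • (1 : H →L[ℂ] H))

/-- `(M,b)` admits a quantum solution on some nonzero complex Hilbert space. -/
def HasQuantumSolution (d : ℕ) {m n : ℕ} (M : Matrix (Fin m) (Fin n) (ZMod d))
    (b : Fin m → ZMod d) : Prop :=
  ∃ (H : Type) (_ : NormedAddCommGroup H) (_ : InnerProductSpace ℂ H)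
    (_ : CompleteSpace H) (_ : Nontrivial H) (A : Fin n → H →L[ℂ] H),
    IsQuantumSolution d M b A

/-- The defining relations of the solution group of the LCS `(M,b)` over `ℤ_d`, on the
generators `none = J` and `some i = gᵢ`:  `J^d = gᵢ^d = e`, `J` is central,
`g_j g_k = g_k g_j` whenever variables `j,k` share a constraint, and
`J^{-bᵢ} ∏_j g_j^{M i j} = e` for every row `i`. -/
def lcsRels (d : ℕ) {m n : ℕ} (M : Matrix (Fin m) (Fin n) (ZMod d)) (b : Fin m → ZMod d) :
    Set (FreeGroup (Option (Fin n))) :=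
  {w | (∃ x : Option (Fin n), w = FreeGroup.of x ^ d) ∨
    (∃ i : Fin n, w = FreeGroup.of (none : Option (Fin n)) * FreeGroup.of (some i) *
        (FreeGroup.of (none : Option (Fin n)))⁻¹ * (FreeGroup.of (some i))⁻¹) ∨
    (∃ j k : Fin n, (∃ i, M i j ≠ 0 ∧ M i k ≠ 0) ∧
        w = FreeGroup.of (some j) * FreeGroup.of (some k) *
          (FreeGroup.of (some j))⁻¹ * (FreeGroup.of (some k))⁻¹) ∨
    (∃ i : Fin m, w = (FreeGroup.of (none : Option (Fin n)) ^ (b i).val)⁻¹ *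
        (List.ofFn fun j => FreeGroup.of (some j) ^ (M i j).val).prod)}

/-- The solution group `𝒢(M,b)`; `PresentedGroup.of none` is `J` and
`PresentedGroup.of (some i)` is the generator `gᵢ`. -/
abbrev SolutionGroup (d : ℕ) {m n : ℕ} (M : Matrix (Fin m) (Fin n) (ZMod d))
    (b : Fin m → ZMod d) := PresentedGroup (lcsRels d M b)

/-- The coefficient matrix of the generalized magic pentagram LCS: rows are the
constraints `a₁x₁+a₂x₂+a₃x₃+a₄x₄ = b₁`, `a₁'x₁+a₅x₅+a₆x₆+a₇x₇ = b₂`,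
`a₂'x₂+a₅'x₅+a₈x₈+a₉x₉ = b₃`, `a₃'x₃+a₆'x₆+a₈'x₈+a₁₀x₁₀ = b₄`,
`a₄'x₄+a₇'x₇+a₉'x₉+a₁₀'x₁₀ = b₅`. -/
def magicPentagramMatrix {d : ℕ} (a a' : Fin 10 → ZMod d) :
    Matrix (Fin 5) (Fin 10) (ZMod d) :=
  Matrix.of
    ![![a 0, a 1, a 2, a 3, 0, 0, 0, 0, 0, 0],
      ![a' 0, 0, 0, 0, a 4, a 5, a 6, 0, 0, 0],
      ![0, a' 1, 0, 0, a' 4, 0, 0, a 7, a 8, 0],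
      ![0, 0, a' 2, 0, 0, a' 5, 0, a' 7, 0, a 9],
      ![0, 0, 0, a' 3, 0, 0, a' 6, 0, a' 8, a' 9]]

/-! ### Helper lemmas -/

section Helpers

private lemma pull' {G : Type*} [Group G] {x y : G} (h : Commute x y) (z : G) :
    y * (x * z) = x * (y * z) := by
  rw [← mul_assoc, ← h.eq, mul_assoc]

private lemma wordId {G : Type*} [Group G] (g4 g5 g6 g7 g8 g9 : G)
    (k45 : Commute g4 g5) (k46 : Commute g4 g6)
    (k56 : Commute g5 g6) (k57 : Commute g5 g7)
    (k68 : Commute g6 g8) (k69 : Commute g6 g9)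
    (k78 : Commute g7 g8) (k89 : Commute g8 g9) :
    (g4 * (g5 * g6)) * ((g4⁻¹ * (g7 * g8)) * ((g5⁻¹ * (g7⁻¹ * g9)) * (g6⁻¹ * (g8⁻¹ * g9⁻¹))))
      = g5 * (g8 * (g5⁻¹ * g8⁻¹)) := by
  simp only [mul_assoc]
  rw [pull' k46.inv_left, pull' k45.inv_left, mul_inv_cancel_left,
    pull' k69.inv_left, pull' k89.inv_left, mul_inv_cancel, mul_one,
    pull' (k57.inv_left.inv_right.symm), pull' k78.inv_left, mul_inv_cancel_left,
    pull' (k56.inv_left.inv_right.symm), pull' k68.inv_left, mul_inv_cancel_left]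

private lemma pentaFull {G : Type*} [Group G]
    (g0 g1 g2 g3 g4 g5 g6 g7 g8 g9 c0 c1 c2 c3 c4 : G)
    (hc1 : ∀ x, Commute c1 x) (hc2 : ∀ x, Commute c2 x)
    (hc3 : ∀ x, Commute c3 x) (hc4 : ∀ x, Commute c4 x)
    (h0 : g0 * (g1 * (g2 * g3)) = c0)
    (h1 : g0⁻¹ * (g4 * (g5 * g6)) = c1)
    (h2 : g1⁻¹ * (g4⁻¹ * (g7 * g8)) = c2)
    (h3 : g2⁻¹ * (g5⁻¹ * (g7⁻¹ * g9)) = c3)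
    (h4 : g3⁻¹ * (g6⁻¹ * (g8⁻¹ * g9⁻¹)) = c4)
    (k45 : Commute g4 g5) (k46 : Commute g4 g6)
    (k56 : Commute g5 g6) (k57 : Commute g5 g7)
    (k68 : Commute g6 g8) (k69 : Commute g6 g9)
    (k78 : Commute g7 g8) (k89 : Commute g8 g9) :
    g5 * (g8 * (g5⁻¹ * g8⁻¹)) = c1 * (c2 * (c3 * (c4 * c0))) := by
  have w1 : g4 * (g5 * g6) = g0 * c1 := by rw [← h1]; group
  have w2 : g4⁻¹ * (g7 * g8) = g1 * c2 := by rw [← h2]; group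
  have w3 : g5⁻¹ * (g7⁻¹ * g9) = g2 * c3 := by rw [← h3]; group
  have w4 : g6⁻¹ * (g8⁻¹ * g9⁻¹) = g3 * c4 := by rw [← h4]; group
  have W := wordId g4 g5 g6 g7 g8 g9 k45 k46 k56 k57 k68 k69 k78 k89
  rw [w1, w2, w3, w4] at W
  rw [← W]
  rw [show g3 * c4 = c4 * g3 from ((hc4 g3)).eq.symm]
  simp only [mul_assoc]
  rw [pull' (hc1 g0), pull' (hc2 g1), pull' (hc2 g0),
    pull' (hc3 g2), pull' (hc3 g1), pull' (hc3 g0),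
    pull' (hc4 g2), pull' (hc4 g1), pull' (hc4 g0), h0]

private lemma pentaSq {G : Type*} [Group G]
    (g0 g1 g2 g3 g4 g5 g6 g7 g8 g9 c0 c1 c2 c3 c4 : G)
    (hc1 : ∀ x, Commute c1 x) (hc2 : ∀ x, Commute c2 x)
    (hc3 : ∀ x, Commute c3 x) (hc4 : ∀ x, Commute c4 x)
    (h0 : g0 * (g1 * (g2 * g3)) = c0)
    (h1 : g0⁻¹ * (g4 * (g5 * g6)) = c1)
    (h2 : g1⁻¹ * (g4⁻¹ * (g7 * g8)) = c2)
    (h3 : g2⁻¹ * (g5⁻¹ * (g7⁻¹ * g9)) = c3)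
    (h4 : g3⁻¹ * (g6⁻¹ * (g8⁻¹ * g9⁻¹)) = c4)
    (k01 : Commute g0 g1) (k23 : Commute g2 g3)
    (k45 : Commute g4 g5) (k46 : Commute g4 g6) (k47 : Commute g4 g7)
    (k48 : Commute g4 g8) (k56 : Commute g5 g6) (k57 : Commute g5 g7)
    (k59 : Commute g5 g9) (k68 : Commute g6 g8) (k69 : Commute g6 g9)
    (k78 : Commute g7 g8) (k79 : Commute g7 g9) (k89 : Commute g8 g9) :
    (c1 * (c2 * (c3 * (c4 * c0)))) * (c2 * (c1 * (c4 * (c3 * c0)))) = 1 := by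
  have A1 := pentaFull g0 g1 g2 g3 g4 g5 g6 g7 g8 g9 c0 c1 c2 c3 c4
    hc1 hc2 hc3 hc4 h0 h1 h2 h3 h4 k45 k46 k56 k57 k68 k69 k78 k89
  have H0 : g1 * (g0 * (g3 * g2)) = c0 := by rw [pull' k01, ← k23.eq]; exact h0
  have H1 : g1⁻¹ * (g4⁻¹ * (g8 * g7)) = c2 := by rw [← k78.eq]; exact h2
  have H2 : g0⁻¹ * ((g4⁻¹)⁻¹ * (g6 * g5)) = c1 := by rw [inv_inv, ← k56.eq]; exact h1
  have H3 : g3⁻¹ * (g8⁻¹ * (g6⁻¹ * g9⁻¹)) = c4 := by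
    rw [pull' (k68.inv_left.inv_right)]; exact h4
  have H4 : g2⁻¹ * (g7⁻¹ * (g5⁻¹ * (g9⁻¹)⁻¹)) = c3 := by
    rw [inv_inv, pull' (k57.inv_left.inv_right)]; exact h3
  have A2 := pentaFull g1 g0 g3 g2 g4⁻¹ g8 g7 g6 g5 g9⁻¹ c0 c2 c1 c4 c3
    hc2 hc1 hc4 hc3 H0 H1 H2 H3 H4
    k48.inv_left k47.inv_left k78.symm k68.symm k57.symm k79.inv_right
    k56.symm k59.inv_right
  rw [← A1, ← A2]; group

private def zp {G : Type*} [Group G] {d : ℕ} (u : G) (x : ZMod d) : G := u ^ x.val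

private lemma pow_mod_eq {G : Type*} [Monoid G] {d : ℕ} {u : G} (hu : u ^ d = 1) (n : ℕ) :
    u ^ (n % d) = u ^ n := by
  conv_rhs => rw [← Nat.div_add_mod n d]
  rw [pow_add, pow_mul, hu, one_pow, one_mul]

private lemma zp_add {G : Type*} [Group G] {d : ℕ} [NeZero d] {u : G} (hu : u ^ d = 1)
    (x y : ZMod d) : zp u (x + y) = zp u x * zp u y := by
  unfold zp; rw [ZMod.val_add, pow_mod_eq hu, pow_add]

private lemma zp_mul {G : Type*} [Group G] {d : ℕ} {u : G} (hu : u ^ d = 1)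
    (x y : ZMod d) : zp u (x * y) = (zp u y) ^ x.val := by
  unfold zp; rw [ZMod.val_mul, pow_mod_eq hu, ← pow_mul, mul_comm]

private lemma zp_zero {G : Type*} [Group G] {d : ℕ} [NeZero d] (u : G) :
    zp u (0 : ZMod d) = 1 := by
  unfold zp; rw [ZMod.val_zero, pow_zero]

private lemma zp_neg {G : Type*} [Group G] {d : ℕ} [NeZero d] {u : G} (hu : u ^ d = 1)
    (x : ZMod d) : zp u (-x) = (zp u x)⁻¹ := by
  apply eq_inv_of_mul_eq_one_left
  rw [← zp_add hu, neg_add_cancel, zp_zero]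

private lemma zp_commute {G : Type*} [Group G] {d : ℕ} {u v : G} (h : Commute u v)
    (x y : ZMod d) : Commute (zp u x) (zp v y) := h.pow_pow _ _

private lemma pow4 {G : Type*} [Group G] (x y z w : G) (n : ℕ)
    (hxy : Commute x y) (hxz : Commute x z) (hxw : Commute x w)
    (hyz : Commute y z) (hyw : Commute y w) (hzw : Commute z w) :
    (x * (y * (z * w))) ^ n = x ^ n * (y ^ n * (z ^ n * w ^ n)) := by
  rw [(hxy.mul_right (hxz.mul_right hxw)).mul_pow, (hyz.mul_right hyw).mul_pow, hzw.mul_pow]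

private lemma pm_mul {d : ℕ} {x y : ZMod d} (hx : x = 1 ∨ x = -1) (hy : y = 1 ∨ y = -1) :
    x * y = 1 ∨ x * y = -1 := by
  rcases hx with h | h <;> rcases hy with h' | h' <;> simp [h, h']

private lemma pm_sq {d : ℕ} {x : ZMod d} (hx : x = 1 ∨ x = -1) : x * x = 1 := by
  rcases hx with h | h <;> simp [h]

private lemma pm_ne_zero {d : ℕ} (hd1 : 1 < d) {x : ZMod d} (hx : x = 1 ∨ x = -1) :
    x ≠ 0 := by
  haveI : Fact (1 < d) := ⟨hd1⟩
  rcases hx with h | h <;> simp [h]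

private lemma kappa_two {d : ℕ} {p q u v : ZMod d}
    (hp : p = 1 ∨ p = -1) (hq : q = 1 ∨ q = -1) (hu : u = 1 ∨ u = -1) (hv : v = 1 ∨ v = -1)
    (hne : p * u + q * v ≠ 0) : (p * u + q * v) * (u * p) = 2 := by
  rcases hp with rfl | rfl <;> rcases hq with rfl | rfl <;>
    rcases hu with rfl | rfl <;> rcases hv with rfl | rfl <;>
    first
      | ring1
      | (exfalso; apply hne; ring1)

private lemma smul_one_eq_one {H : Type} [NormedAddCommGroup H] [InnerProductSpace ℂ H]
    [Nontrivial H] {c : ℂ} (h : c • (1 : H →L[ℂ] H) = 1) : c = 1 := by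
  obtain ⟨v, hv⟩ := exists_ne (0 : H)
  have h2 : c • v = v := by
    have := congrArg (fun (T : H →L[ℂ] H) => T v) h
    simpa using this
  have h3 : (c - 1) • v = 0 := by rw [sub_smul, one_smul, h2, sub_self]
  rcases smul_eq_zero.mp h3 with h4 | h4
  · exact sub_eq_zero.mp h4
  · exact absurd h4 hv

private lemma pent_solves {d : ℕ} (a a' : Fin 10 → ZMod d) (b : Fin 5 → ZMod d)
    (x0 x1 x2 x3 x4 x5 x6 x7 x8 x9 : ZMod d)
    (r0 : a 0 * x0 + a 1 * x1 + a 2 * x2 + a 3 * x3 = b 0)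
    (r1 : a' 0 * x0 + a 4 * x4 + a 5 * x5 + a 6 * x6 = b 1)
    (r2 : a' 1 * x1 + a' 4 * x4 + a 7 * x7 + a 8 * x8 = b 2)
    (r3 : a' 2 * x2 + a' 5 * x5 + a' 7 * x7 + a 9 * x9 = b 3)
    (r4 : a' 3 * x3 + a' 6 * x6 + a' 8 * x8 + a' 9 * x9 = b 4) :
    (magicPentagramMatrix a a').mulVec ![x0, x1, x2, x3, x4, x5, x6, x7, x8, x9] = b := by
  funext i
  fin_cases i
  · show ∑ j, magicPentagramMatrix a a' 0 j * ![x0, x1, x2, x3, x4, x5, x6, x7, x8, x9] j = b 0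
    rw [Fin.sum_univ_succ, Fin.sum_univ_succ, Fin.sum_univ_succ, Fin.sum_univ_succ,
      Fin.sum_univ_succ, Fin.sum_univ_succ, Fin.sum_univ_succ, Fin.sum_univ_succ,
      Fin.sum_univ_succ, Fin.sum_univ_succ, Fin.sum_univ_zero]
    show a 0 * x0 + (a 1 * x1 + (a 2 * x2 + (a 3 * x3 + ((0:ZMod d) * x4 + ((0:ZMod d) * x5 +
      ((0:ZMod d) * x6 + ((0:ZMod d) * x7 + ((0:ZMod d) * x8 + ((0:ZMod d) * x9 + 0))))))))) = b 0
    linear_combination r0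
  · show ∑ j, magicPentagramMatrix a a' 1 j * ![x0, x1, x2, x3, x4, x5, x6, x7, x8, x9] j = b 1
    rw [Fin.sum_univ_succ, Fin.sum_univ_succ, Fin.sum_univ_succ, Fin.sum_univ_succ,
      Fin.sum_univ_succ, Fin.sum_univ_succ, Fin.sum_univ_succ, Fin.sum_univ_succ,
      Fin.sum_univ_succ, Fin.sum_univ_succ, Fin.sum_univ_zero]
    show a' 0 * x0 + ((0:ZMod d) * x1 + ((0:ZMod d) * x2 + ((0:ZMod d) * x3 + (a 4 * x4 +
      (a 5 * x5 + (a 6 * x6 + ((0:ZMod d) * x7 + ((0:ZMod d) * x8 + ((0:ZMod d) * x9 + 0))))))))) = b 1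
    linear_combination r1
  · show ∑ j, magicPentagramMatrix a a' 2 j * ![x0, x1, x2, x3, x4, x5, x6, x7, x8, x9] j = b 2
    rw [Fin.sum_univ_succ, Fin.sum_univ_succ, Fin.sum_univ_succ, Fin.sum_univ_succ,
      Fin.sum_univ_succ, Fin.sum_univ_succ, Fin.sum_univ_succ, Fin.sum_univ_succ,
      Fin.sum_univ_succ, Fin.sum_univ_succ, Fin.sum_univ_zero]
    show (0:ZMod d) * x0 + (a' 1 * x1 + ((0:ZMod d) * x2 + ((0:ZMod d) * x3 + (a' 4 * x4 +
      ((0:ZMod d) * x5 + ((0:ZMod d) * x6 + (a 7 * x7 + (a 8 * x8 + ((0:ZMod d) * x9 + 0))))))))) = b 2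
    linear_combination r2
  · show ∑ j, magicPentagramMatrix a a' 3 j * ![x0, x1, x2, x3, x4, x5, x6, x7, x8, x9] j = b 3
    rw [Fin.sum_univ_succ, Fin.sum_univ_succ, Fin.sum_univ_succ, Fin.sum_univ_succ,
      Fin.sum_univ_succ, Fin.sum_univ_succ, Fin.sum_univ_succ, Fin.sum_univ_succ,
      Fin.sum_univ_succ, Fin.sum_univ_succ, Fin.sum_univ_zero]
    show (0:ZMod d) * x0 + ((0:ZMod d) * x1 + (a' 2 * x2 + ((0:ZMod d) * x3 + ((0:ZMod d) * x4 +
      (a' 5 * x5 + ((0:ZMod d) * x6 + (a' 7 * x7 + ((0:ZMod d) * x8 + (a 9 * x9 + 0))))))))) = b 3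
    linear_combination r3
  · show ∑ j, magicPentagramMatrix a a' 4 j * ![x0, x1, x2, x3, x4, x5, x6, x7, x8, x9] j = b 4
    rw [Fin.sum_univ_succ, Fin.sum_univ_succ, Fin.sum_univ_succ, Fin.sum_univ_succ,
      Fin.sum_univ_succ, Fin.sum_univ_succ, Fin.sum_univ_succ, Fin.sum_univ_succ,
      Fin.sum_univ_succ, Fin.sum_univ_succ, Fin.sum_univ_zero]
    show (0:ZMod d) * x0 + ((0:ZMod d) * x1 + ((0:ZMod d) * x2 + (a' 3 * x3 + ((0:ZMod d) * x4 +
      ((0:ZMod d) * x5 + (a' 6 * x6 + ((0:ZMod d) * x7 + (a' 8 * x8 + (a' 9 * x9 + 0))))))))) = b 4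
    linear_combination r4

private theorem classical_to_quantum (d : ℕ) (hd1 : 1 < d) {m n : ℕ}
    (M : Matrix (Fin m) (Fin n) (ZMod d)) (b : Fin m → ZMod d)
    (x : Fin n → ZMod d) (hx : M.mulVec x = b) :
    HasQuantumSolution d M b := by
  haveI : NeZero d := ⟨by omega⟩
  set ω := rootOfUnity d with hωdef
  have hω : IsPrimitiveRoot ω d := Complex.isPrimitiveRoot_exp d (by omega)
  have hωd : ω ^ d = 1 := hω.pow_eq_one
  refine ⟨ℂ, inferInstance, inferInstance, inferInstance, inferInstance,
    fun j => (ω ^ (x j).val) • (1 : ℂ →L[ℂ] ℂ), ?_, ?_, ?_⟩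
  · intro i
    rw [smul_pow, one_pow, ← pow_mul, mul_comm, pow_mul, hωd, one_pow, one_smul]
  · intro j k _
    show _ * _ = _ * _
    rw [smul_mul_assoc, one_mul, smul_smul, smul_mul_assoc, one_mul, smul_smul, mul_comm]
  · intro i
    have hmod : ∀ p q : ℕ, p % d = q % d → ω ^ p = ω ^ q := by
      intro p q h
      rw [← pow_mod_eq hωd p, ← pow_mod_eq hωd q, h]
    have key : (List.ofFn fun j => ((ω ^ (x j).val) • (1 : ℂ →L[ℂ] ℂ)) ^ (M i j).val).prod
        = (ω ^ ∑ j, (x j).val * (M i j).val) • (1 : ℂ →L[ℂ] ℂ) := by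
      have e1 : (fun j => ((ω ^ (x j).val) • (1 : ℂ →L[ℂ] ℂ)) ^ (M i j).val)
          = fun j => (ω ^ ((x j).val * (M i j).val)) • (1 : ℂ →L[ℂ] ℂ) := by
        funext j
        rw [smul_pow, one_pow, ← pow_mul]
      rw [e1]
      have e2 : (List.ofFn fun j => (ω ^ ((x j).val * (M i j).val)) • (1 : ℂ →L[ℂ] ℂ))
          = (List.ofFn fun j => ω ^ ((x j).val * (M i j).val)).map (algebraMap ℂ (ℂ →L[ℂ] ℂ)) := by
        rw [List.map_ofFn]
        exact congrArg List.ofFn (funext fun j => (Algebra.algebraMap_eq_smul_one _).symm)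
      rw [e2, ← map_list_prod (algebraMap ℂ (ℂ →L[ℂ] ℂ)), List.prod_ofFn,
        Finset.prod_pow_eq_pow_sum, Algebra.algebraMap_eq_smul_one]
    rw [key]
    congr 1
    apply hmod
    have hcast : ((∑ j, (x j).val * (M i j).val : ℕ) : ZMod d) = (((b i).val : ℕ) : ZMod d) := by
      push_cast
      simp only [ZMod.natCast_val, ZMod.cast_id]
      calc (∑ j, x j * M i j) = ∑ j, M i j * x j :=
            Finset.sum_congr rfl fun j _ => mul_comm _ _
        _ = b i := by rw [← hx]; rfl
    exact (ZMod.natCast_eq_natCast_iff _ _ _).mp hcast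

end Helpers

/-- for `d > 1` odd, a magic-pentagram-form LCS over `ℤ_d` with all
coefficients in `{1, -1}` admits a quantum solution on some nonzero complex Hilbert space iff
it has a classical solution. -/
theorem magicPentagram_quantum_iff_classical_odd (d : ℕ) (hd : Odd d) (hd1 : 1 < d)
    (a a' : Fin 10 → ZMod d) (ha : ∀ i, a i = 1 ∨ a i = -1) (ha' : ∀ i, a' i = 1 ∨ a' i = -1)
    (b : Fin 5 → ZMod d) :
    HasQuantumSolution d (magicPentagramMatrix a a') b ↔
      ∃ x : Fin 10 → ZMod d, (magicPentagramMatrix a a').mulVec x = b := by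
  haveI : NeZero d := ⟨by omega⟩
  obtain ⟨k, hk⟩ := hd
  set i2 : ZMod d := ((k + 1 : ℕ) : ZMod d) with hi2
  have h2i : (2 : ZMod d) * i2 = 1 := by
    have h1 : ((2 * (k + 1) : ℕ) : ZMod d) = 1 := by
      rw [show 2 * (k + 1) = d + 1 by omega]
      push_cast [ZMod.natCast_self]
      ring
    calc (2 : ZMod d) * i2 = ((2 * (k + 1) : ℕ) : ZMod d) := by push_cast [hi2]; ring
      _ = 1 := h1
  have sqa : ∀ j, a j * a j = 1 := fun j => pm_sq (ha j)
  have sqa' : ∀ j, a' j * a' j = 1 := fun j => pm_sq (ha' j)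
  constructor
  · rintro ⟨H, iN, iP, iC, iT, A, hpow, hcomm, hrow⟩
    by_cases hb4 : a 0 * a' 0 * a 4 + a 1 * a' 1 * a' 4 = 0
    · by_cases hb5 : a 0 * a' 0 * a 5 + a 2 * a' 2 * a' 5 = 0
      · by_cases hb6 : a 0 * a' 0 * a 6 + a 3 * a' 3 * a' 6 = 0
        · by_cases hb7 : a 1 * a' 1 * a 7 + a 2 * a' 2 * a' 7 = 0
          · by_cases hb8 : a 1 * a' 1 * a 8 + a 3 * a' 3 * a' 8 = 0
            · by_cases hb9 : a 2 * a' 2 * a 9 + a 3 * a' 3 * a' 9 = 0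
              · -- balanced case: use the quantum solution
                set ω := rootOfUnity d with hωdef
                have hω : IsPrimitiveRoot ω d := Complex.isPrimitiveRoot_exp d (by omega)
                have hωd : ω ^ d = 1 := hω.pow_eq_one
                have hd1' : 1 ≤ d := by omega
                have hval : ∀ j : Fin 10, A j ^ (d - 1) * A j = 1 := fun j => by
                  rw [← pow_succ, Nat.sub_add_cancel hd1']; exact hpow j
                have hval' : ∀ j : Fin 10, A j * A j ^ (d - 1) = 1 := fun j => by
                  rw [← pow_succ', Nat.sub_add_cancel hd1']; exact hpow j
                set u : Fin 10 → (H →L[ℂ] H)ˣ :=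
                  fun j => ⟨A j, A j ^ (d - 1), hval' j, hval j⟩ with hu
                have huval : ∀ j, ((u j : (H →L[ℂ] H)ˣ) : H →L[ℂ] H) = A j := fun j => rfl
                have hud : ∀ j, (u j) ^ d = 1 := fun j => Units.ext (by
                  rw [Units.val_pow_eq_pow_val, Units.val_one, huval]; exact hpow j)
                have hC : ∀ (i : Fin 5) (j k : Fin 10), magicPentagramMatrix a a' i j ≠ 0 →
                    magicPentagramMatrix a a' i k ≠ 0 → Commute (u j) (u k) := by
                  intro i j k h1 h2
                  have := hcomm j k ⟨i, h1, h2⟩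
                  exact Units.ext (by
                    rw [Units.val_mul, Units.val_mul, huval, huval]; exact this)
                have na : ∀ j, a j ≠ 0 := fun j => pm_ne_zero hd1 (ha j)
                have na' : ∀ j, a' j ≠ 0 := fun j => pm_ne_zero hd1 (ha' j)
                have K01 := hC 0 0 1 (na 0) (na 1)
                have K23 := hC 0 2 3 (na 2) (na 3)
                have K04 := hC 1 0 4 (na' 0) (na 4)
                have K05 := hC 1 0 5 (na' 0) (na 5)
                have K06 := hC 1 0 6 (na' 0) (na 6)
                have K45 := hC 1 4 5 (na 4) (na 5)
                have K46 := hC 1 4 6 (na 4) (na 6)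
                have K56 := hC 1 5 6 (na 5) (na 6)
                have K14 := hC 2 1 4 (na' 1) (na' 4)
                have K17 := hC 2 1 7 (na' 1) (na 7)
                have K18 := hC 2 1 8 (na' 1) (na 8)
                have K47 := hC 2 4 7 (na' 4) (na 7)
                have K48 := hC 2 4 8 (na' 4) (na 8)
                have K78 := hC 2 7 8 (na 7) (na 8)
                have K25 := hC 3 2 5 (na' 2) (na' 5)
                have K27 := hC 3 2 7 (na' 2) (na' 7)
                have K29 := hC 3 2 9 (na' 2) (na 9)
                have K57 := hC 3 5 7 (na' 5) (na' 7)
                have K59 := hC 3 5 9 (na' 5) (na 9)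
                have K79 := hC 3 7 9 (na' 7) (na 9)
                have K36 := hC 4 3 6 (na' 3) (na' 6)
                have K38 := hC 4 3 8 (na' 3) (na' 8)
                have K39 := hC 4 3 9 (na' 3) (na' 9)
                have K68 := hC 4 6 8 (na' 6) (na' 8)
                have K69 := hC 4 6 9 (na' 6) (na' 9)
                have K89 := hC 4 8 9 (na' 8) (na' 9)
                have hωne : ω ≠ 0 := by rw [hωdef]; exact Complex.exp_ne_zero _
                set ζu : (H →L[ℂ] H)ˣ :=
                  Units.map (algebraMap ℂ (H →L[ℂ] H)).toMonoidHom (Units.mk0 ω hωne) with hζu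
                have hζval : ((ζu : (H →L[ℂ] H)ˣ) : H →L[ℂ] H)
                    = algebraMap ℂ (H →L[ℂ] H) ω := rfl
                have hζd : ζu ^ d = 1 := Units.ext (by
                  rw [Units.val_pow_eq_pow_val, Units.val_one, hζval, ← map_pow, hωd, map_one])
                have hζc : ∀ x : (H →L[ℂ] H)ˣ, Commute ζu x := fun x => Units.ext (by
                  rw [Units.val_mul, Units.val_mul, hζval]
                  exact Algebra.commutes ω ((x : (H →L[ℂ] H)ˣ) : H →L[ℂ] H))
                have hcz : ∀ (e : ZMod d) (x : (H →L[ℂ] H)ˣ), Commute (zp ζu e) x :=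
                  fun e x => (hζc x).pow_left _
                -- the five rows at the level of units
                have q0 : zp (u 0) (a 0) * (zp (u 1) (a 1) * (zp (u 2) (a 2) * zp (u 3) (a 3)))
                    = zp ζu (b 0) := by
                  apply Units.ext
                  have e : (List.ofFn fun j => A j ^ ((magicPentagramMatrix a a') 0 j).val)
                      = [A 0 ^ (a 0).val, A 1 ^ (a 1).val, A 2 ^ (a 2).val, A 3 ^ (a 3).val,
                         A 4 ^ (0 : ZMod d).val, A 5 ^ (0 : ZMod d).val, A 6 ^ (0 : ZMod d).val,
                         A 7 ^ (0 : ZMod d).val, A 8 ^ (0 : ZMod d).val,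
                         A 9 ^ (0 : ZMod d).val] := rfl
                  have q := hrow 0
                  rw [e] at q
                  simp only [List.prod_cons, List.prod_nil, ZMod.val_zero, pow_zero,
                    one_mul, mul_one] at q
                  simp only [zp, Units.val_mul, Units.val_pow_eq_pow_val, huval, hζval]
                  rw [← map_pow, Algebra.algebraMap_eq_smul_one]
                  exact q
                have q1 : zp (u 0) (a' 0) * (zp (u 4) (a 4) * (zp (u 5) (a 5) * zp (u 6) (a 6)))
                    = zp ζu (b 1) := by
                  apply Units.ext
                  have e : (List.ofFn fun j => A j ^ ((magicPentagramMatrix a a') 1 j).val)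
                      = [A 0 ^ (a' 0).val, A 1 ^ (0 : ZMod d).val, A 2 ^ (0 : ZMod d).val,
                         A 3 ^ (0 : ZMod d).val, A 4 ^ (a 4).val, A 5 ^ (a 5).val,
                         A 6 ^ (a 6).val, A 7 ^ (0 : ZMod d).val, A 8 ^ (0 : ZMod d).val,
                         A 9 ^ (0 : ZMod d).val] := rfl
                  have q := hrow 1
                  rw [e] at q
                  simp only [List.prod_cons, List.prod_nil, ZMod.val_zero, pow_zero,
                    one_mul, mul_one] at q
                  simp only [zp, Units.val_mul, Units.val_pow_eq_pow_val, huval, hζval]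
                  rw [← map_pow, Algebra.algebraMap_eq_smul_one]
                  exact q
                have q2 : zp (u 1) (a' 1) * (zp (u 4) (a' 4) * (zp (u 7) (a 7) * zp (u 8) (a 8)))
                    = zp ζu (b 2) := by
                  apply Units.ext
                  have e : (List.ofFn fun j => A j ^ ((magicPentagramMatrix a a') 2 j).val)
                      = [A 0 ^ (0 : ZMod d).val, A 1 ^ (a' 1).val, A 2 ^ (0 : ZMod d).val,
                         A 3 ^ (0 : ZMod d).val, A 4 ^ (a' 4).val, A 5 ^ (0 : ZMod d).val,
                         A 6 ^ (0 : ZMod d).val, A 7 ^ (a 7).val, A 8 ^ (a 8).val,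
                         A 9 ^ (0 : ZMod d).val] := rfl
                  have q := hrow 2
                  rw [e] at q
                  simp only [List.prod_cons, List.prod_nil, ZMod.val_zero, pow_zero,
                    one_mul, mul_one] at q
                  simp only [zp, Units.val_mul, Units.val_pow_eq_pow_val, huval, hζval]
                  rw [← map_pow, Algebra.algebraMap_eq_smul_one]
                  exact q
                have q3 : zp (u 2) (a' 2) * (zp (u 5) (a' 5) * (zp (u 7) (a' 7) * zp (u 9) (a 9)))
                    = zp ζu (b 3) := by
                  apply Units.ext
                  have e : (List.ofFn fun j => A j ^ ((magicPentagramMatrix a a') 3 j).val)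
                      = [A 0 ^ (0 : ZMod d).val, A 1 ^ (0 : ZMod d).val, A 2 ^ (a' 2).val,
                         A 3 ^ (0 : ZMod d).val, A 4 ^ (0 : ZMod d).val, A 5 ^ (a' 5).val,
                         A 6 ^ (0 : ZMod d).val, A 7 ^ (a' 7).val, A 8 ^ (0 : ZMod d).val,
                         A 9 ^ (a 9).val] := rfl
                  have q := hrow 3
                  rw [e] at q
                  simp only [List.prod_cons, List.prod_nil, ZMod.val_zero, pow_zero,
                    one_mul, mul_one] at q
                  simp only [zp, Units.val_mul, Units.val_pow_eq_pow_val, huval, hζval]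
                  rw [← map_pow, Algebra.algebraMap_eq_smul_one]
                  exact q
                have q4 : zp (u 3) (a' 3) * (zp (u 6) (a' 6) * (zp (u 8) (a' 8) * zp (u 9) (a' 9)))
                    = zp ζu (b 4) := by
                  apply Units.ext
                  have e : (List.ofFn fun j => A j ^ ((magicPentagramMatrix a a') 4 j).val)
                      = [A 0 ^ (0 : ZMod d).val, A 1 ^ (0 : ZMod d).val, A 2 ^ (0 : ZMod d).val,
                         A 3 ^ (a' 3).val, A 4 ^ (0 : ZMod d).val, A 5 ^ (0 : ZMod d).val,
                         A 6 ^ (a' 6).val, A 7 ^ (0 : ZMod d).val, A 8 ^ (a' 8).val,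
                         A 9 ^ (a' 9).val] := rfl
                  have q := hrow 4
                  rw [e] at q
                  simp only [List.prod_cons, List.prod_nil, ZMod.val_zero, pow_zero,
                    one_mul, mul_one] at q
                  simp only [zp, Units.val_mul, Units.val_pow_eq_pow_val, huval, hζval]
                  rw [← map_pow, Algebra.algebraMap_eq_smul_one]
                  exact q
                -- canonical signs
                set ε1 : ZMod d := -(a 0 * a' 0) with hε1
                set ε2 : ZMod d := -(a 1 * a' 1) with hε2
                set ε3 : ZMod d := -(a 2 * a' 2) with hε3
                set ε4 : ZMod d := -(a 3 * a' 3) with hε4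
                -- canonical row relations
                have h1 : (zp (u 0) (a 0))⁻¹ * (zp (u 4) (ε1 * a 4) *
                    (zp (u 5) (ε1 * a 5) * zp (u 6) (ε1 * a 6))) = zp ζu (ε1 * b 1) := by
                  have t : (zp (u 0) (a' 0)) ^ ε1.val * ((zp (u 4) (a 4)) ^ ε1.val *
                      ((zp (u 5) (a 5)) ^ ε1.val * (zp (u 6) (a 6)) ^ ε1.val))
                      = (zp ζu (b 1)) ^ ε1.val := by
                    rw [← pow4 _ _ _ _ _ (zp_commute K04 _ _) (zp_commute K05 _ _)
                      (zp_commute K06 _ _) (zp_commute K45 _ _) (zp_commute K46 _ _)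
                      (zp_commute K56 _ _), q1]
                  rw [← zp_mul (hud 0), ← zp_mul (hud 4), ← zp_mul (hud 5), ← zp_mul (hud 6),
                    ← zp_mul hζd] at t
                  rw [show ε1 * a' 0 = -(a 0) from by
                      rw [hε1]; linear_combination (-(a 0)) * sqa' 0,
                    zp_neg (hud 0)] at t
                  exact t
                have h2 : (zp (u 1) (a 1))⁻¹ * ((zp (u 4) (ε1 * a 4))⁻¹ *
                    (zp (u 7) (ε2 * a 7) * zp (u 8) (ε2 * a 8))) = zp ζu (ε2 * b 2) := by
                  have t : (zp (u 1) (a' 1)) ^ ε2.val * ((zp (u 4) (a' 4)) ^ ε2.val *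
                      ((zp (u 7) (a 7)) ^ ε2.val * (zp (u 8) (a 8)) ^ ε2.val))
                      = (zp ζu (b 2)) ^ ε2.val := by
                    rw [← pow4 _ _ _ _ _ (zp_commute K14 _ _) (zp_commute K17 _ _)
                      (zp_commute K18 _ _) (zp_commute K47 _ _) (zp_commute K48 _ _)
                      (zp_commute K78 _ _), q2]
                  rw [← zp_mul (hud 1), ← zp_mul (hud 4), ← zp_mul (hud 7), ← zp_mul (hud 8),
                    ← zp_mul hζd] at t
                  rw [show ε2 * a' 1 = -(a 1) from by
                      rw [hε2]; linear_combination (-(a 1)) * sqa' 1,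
                    show ε2 * a' 4 = -(ε1 * a 4) from by
                      rw [hε1, hε2]; linear_combination -hb4,
                    zp_neg (hud 1), zp_neg (hud 4)] at t
                  exact t
                have h3 : (zp (u 2) (a 2))⁻¹ * ((zp (u 5) (ε1 * a 5))⁻¹ *
                    ((zp (u 7) (ε2 * a 7))⁻¹ * zp (u 9) (ε3 * a 9))) = zp ζu (ε3 * b 3) := by
                  have t : (zp (u 2) (a' 2)) ^ ε3.val * ((zp (u 5) (a' 5)) ^ ε3.val *
                      ((zp (u 7) (a' 7)) ^ ε3.val * (zp (u 9) (a 9)) ^ ε3.val))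
                      = (zp ζu (b 3)) ^ ε3.val := by
                    rw [← pow4 _ _ _ _ _ (zp_commute K25 _ _) (zp_commute K27 _ _)
                      (zp_commute K29 _ _) (zp_commute K57 _ _) (zp_commute K59 _ _)
                      (zp_commute K79 _ _), q3]
                  rw [← zp_mul (hud 2), ← zp_mul (hud 5), ← zp_mul (hud 7), ← zp_mul (hud 9),
                    ← zp_mul hζd] at t
                  rw [show ε3 * a' 2 = -(a 2) from by
                      rw [hε3]; linear_combination (-(a 2)) * sqa' 2,
                    show ε3 * a' 5 = -(ε1 * a 5) from by
                      rw [hε1, hε3]; linear_combination -hb5,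
                    show ε3 * a' 7 = -(ε2 * a 7) from by
                      rw [hε2, hε3]; linear_combination -hb7,
                    zp_neg (hud 2), zp_neg (hud 5), zp_neg (hud 7)] at t
                  exact t
                have h4 : (zp (u 3) (a 3))⁻¹ * ((zp (u 6) (ε1 * a 6))⁻¹ *
                    ((zp (u 8) (ε2 * a 8))⁻¹ * (zp (u 9) (ε3 * a 9))⁻¹)) = zp ζu (ε4 * b 4) := by
                  have t : (zp (u 3) (a' 3)) ^ ε4.val * ((zp (u 6) (a' 6)) ^ ε4.val *
                      ((zp (u 8) (a' 8)) ^ ε4.val * (zp (u 9) (a' 9)) ^ ε4.val))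
                      = (zp ζu (b 4)) ^ ε4.val := by
                    rw [← pow4 _ _ _ _ _ (zp_commute K36 _ _) (zp_commute K38 _ _)
                      (zp_commute K39 _ _) (zp_commute K68 _ _) (zp_commute K69 _ _)
                      (zp_commute K89 _ _), q4]
                  rw [← zp_mul (hud 3), ← zp_mul (hud 6), ← zp_mul (hud 8), ← zp_mul (hud 9),
                    ← zp_mul hζd] at t
                  rw [show ε4 * a' 3 = -(a 3) from by
                      rw [hε4]; linear_combination (-(a 3)) * sqa' 3,
                    show ε4 * a' 6 = -(ε1 * a 6) from by
                      rw [hε1, hε4]; linear_combination -hb6,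
                    show ε4 * a' 8 = -(ε2 * a 8) from by
                      rw [hε2, hε4]; linear_combination -hb8,
                    show ε4 * a' 9 = -(ε3 * a 9) from by
                      rw [hε3, hε4]; linear_combination -hb9,
                    zp_neg (hud 3), zp_neg (hud 6), zp_neg (hud 8), zp_neg (hud 9)] at t
                  exact t
                have SQ := pentaSq (zp (u 0) (a 0)) (zp (u 1) (a 1)) (zp (u 2) (a 2))
                  (zp (u 3) (a 3)) (zp (u 4) (ε1 * a 4)) (zp (u 5) (ε1 * a 5))
                  (zp (u 6) (ε1 * a 6)) (zp (u 7) (ε2 * a 7)) (zp (u 8) (ε2 * a 8))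
                  (zp (u 9) (ε3 * a 9)) (zp ζu (b 0)) (zp ζu (ε1 * b 1)) (zp ζu (ε2 * b 2))
                  (zp ζu (ε3 * b 3)) (zp ζu (ε4 * b 4))
                  (hcz _) (hcz _) (hcz _) (hcz _) q0 h1 h2 h3 h4
                  (zp_commute K01 _ _) (zp_commute K23 _ _) (zp_commute K45 _ _)
                  (zp_commute K46 _ _) (zp_commute K47 _ _) (zp_commute K48 _ _)
                  (zp_commute K56 _ _) (zp_commute K57 _ _) (zp_commute K59 _ _)
                  (zp_commute K68 _ _) (zp_commute K69 _ _) (zp_commute K78 _ _)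
                  (zp_commute K79 _ _) (zp_commute K89 _ _)
                have hEq : (zp ζu (ε1 * b 1) * (zp ζu (ε2 * b 2) * (zp ζu (ε3 * b 3) *
                    (zp ζu (ε4 * b 4) * zp ζu (b 0))))) * (zp ζu (ε2 * b 2) *
                    (zp ζu (ε1 * b 1) * (zp ζu (ε4 * b 4) * (zp ζu (ε3 * b 3) * zp ζu (b 0)))))
                    = zp ζu (2 * (b 0 + ε1 * b 1 + ε2 * b 2 + ε3 * b 3 + ε4 * b 4)) := by
                  rw [show 2 * (b 0 + ε1 * b 1 + ε2 * b 2 + ε3 * b 3 + ε4 * b 4)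
                      = (ε1 * b 1 + (ε2 * b 2 + (ε3 * b 3 + (ε4 * b 4 + b 0))))
                        + (ε2 * b 2 + (ε1 * b 1 + (ε4 * b 4 + (ε3 * b 3 + b 0)))) from by ring]
                  simp only [zp_add hζd]
                have hz1 : zp ζu (2 * (b 0 + ε1 * b 1 + ε2 * b 2 + ε3 * b 3 + ε4 * b 4)) = 1 := by
                  rw [← hEq]; exact SQ
                have hsc : ω ^ (2 * (b 0 + ε1 * b 1 + ε2 * b 2 + ε3 * b 3 + ε4 * b 4)).val
                    = 1 := by
                  have hv := congrArg Units.val hz1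
                  simp only [zp, Units.val_pow_eq_pow_val, Units.val_one, hζval] at hv
                  rw [← map_pow, Algebra.algebraMap_eq_smul_one] at hv
                  exact smul_one_eq_one hv
                have hdvd : d ∣ (2 * (b 0 + ε1 * b 1 + ε2 * b 2 + ε3 * b 3 + ε4 * b 4)).val :=
                  (hω.pow_eq_one_iff_dvd _).mp hsc
                have h2P : 2 * (b 0 + ε1 * b 1 + ε2 * b 2 + ε3 * b 3 + ε4 * b 4) = 0 := by
                  have hlt := ZMod.val_lt (2 * (b 0 + ε1 * b 1 + ε2 * b 2 + ε3 * b 3 + ε4 * b 4))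
                  exact (ZMod.val_eq_zero _).mp (Nat.eq_zero_of_dvd_of_lt hdvd hlt)
                have hP : b 0 + ε1 * b 1 + ε2 * b 2 + ε3 * b 3 + ε4 * b 4 = 0 := by
                  linear_combination i2 * h2P
                    - (b 0 + ε1 * b 1 + ε2 * b 2 + ε3 * b 3 + ε4 * b 4) * h2i
                rw [hε1, hε2, hε3, hε4] at hP
                refine ⟨![a' 0 * b 1, a' 1 * b 2, a' 2 * b 3, a' 3 * b 4,
                  0, 0, 0, 0, 0, 0], ?_⟩
                apply pent_solves
                · linear_combination -hP
                · linear_combination b 1 * sqa' 0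
                · linear_combination b 2 * sqa' 1
                · linear_combination b 3 * sqa' 2
                · linear_combination b 4 * sqa' 3
              · -- edge 9 unbalanced : j=9, p=3, q=4
                have hkey := kappa_two (pm_mul (ha 2) (ha' 2)) (pm_mul (ha 3) (ha' 3))
                  (ha 9) (ha' 9) (by
                    intro h; exact hb9 (by linear_combination h))
                set T : ZMod d := a 0 * a' 0 * b 1 + a 1 * a' 1 * b 2 + a 2 * a' 2 * b 3
                  + a 3 * a' 3 * b 4 - b 0 with hT
                set w : ZMod d := a 9 * (a 2 * a' 2) * (i2 * T) with hw
                refine ⟨![a' 0 * b 1, a' 1 * b 2, a' 2 * (b 3 - a 9 * w),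
                  a' 3 * (b 4 - a' 9 * w), 0, 0, 0, 0, 0, w], ?_⟩
                apply pent_solves
                · linear_combination (-1 : ZMod d) * hT
                    - (a 2 * a' 2 * a 9 + a 3 * a' 3 * a' 9) * hw
                    - i2 * T * hkey - T * h2i
                · linear_combination b 1 * sqa' 0
                · linear_combination b 2 * sqa' 1
                · linear_combination (b 3 - a 9 * w) * sqa' 2
                · linear_combination (b 4 - a' 9 * w) * sqa' 3
            · -- edge 8 unbalanced : j=8, p=2, q=4
              have hkey := kappa_two (pm_mul (ha 1) (ha' 1)) (pm_mul (ha 3) (ha' 3))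
                (ha 8) (ha' 8) (by
                  intro h; exact hb8 (by linear_combination h))
              set T : ZMod d := a 0 * a' 0 * b 1 + a 1 * a' 1 * b 2 + a 2 * a' 2 * b 3
                + a 3 * a' 3 * b 4 - b 0 with hT
              set w : ZMod d := a 8 * (a 1 * a' 1) * (i2 * T) with hw
              refine ⟨![a' 0 * b 1, a' 1 * (b 2 - a 8 * w), a' 2 * b 3,
                a' 3 * (b 4 - a' 8 * w), 0, 0, 0, 0, w, 0], ?_⟩
              apply pent_solves
              · linear_combination (-1 : ZMod d) * hT
                  - (a 1 * a' 1 * a 8 + a 3 * a' 3 * a' 8) * hw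
                  - i2 * T * hkey - T * h2i
              · linear_combination b 1 * sqa' 0
              · linear_combination (b 2 - a 8 * w) * sqa' 1
              · linear_combination b 3 * sqa' 2
              · linear_combination (b 4 - a' 8 * w) * sqa' 3
          · -- edge 7 unbalanced : j=7, p=2, q=3
            have hkey := kappa_two (pm_mul (ha 1) (ha' 1)) (pm_mul (ha 2) (ha' 2))
              (ha 7) (ha' 7) (by
                intro h; exact hb7 (by linear_combination h))
            set T : ZMod d := a 0 * a' 0 * b 1 + a 1 * a' 1 * b 2 + a 2 * a' 2 * b 3
              + a 3 * a' 3 * b 4 - b 0 with hT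
            set w : ZMod d := a 7 * (a 1 * a' 1) * (i2 * T) with hw
            refine ⟨![a' 0 * b 1, a' 1 * (b 2 - a 7 * w), a' 2 * (b 3 - a' 7 * w),
              a' 3 * b 4, 0, 0, 0, w, 0, 0], ?_⟩
            apply pent_solves
            · linear_combination (-1 : ZMod d) * hT
                - (a 1 * a' 1 * a 7 + a 2 * a' 2 * a' 7) * hw
                - i2 * T * hkey - T * h2i
            · linear_combination b 1 * sqa' 0
            · linear_combination (b 2 - a 7 * w) * sqa' 1
            · linear_combination (b 3 - a' 7 * w) * sqa' 2
            · linear_combination b 4 * sqa' 3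
        · -- edge 6 unbalanced : j=6, p=1, q=4
          have hkey := kappa_two (pm_mul (ha 0) (ha' 0)) (pm_mul (ha 3) (ha' 3))
            (ha 6) (ha' 6) (by
              intro h; exact hb6 (by linear_combination h))
          set T : ZMod d := a 0 * a' 0 * b 1 + a 1 * a' 1 * b 2 + a 2 * a' 2 * b 3
            + a 3 * a' 3 * b 4 - b 0 with hT
          set w : ZMod d := a 6 * (a 0 * a' 0) * (i2 * T) with hw
          refine ⟨![a' 0 * (b 1 - a 6 * w), a' 1 * b 2, a' 2 * b 3,
            a' 3 * (b 4 - a' 6 * w), 0, 0, w, 0, 0, 0], ?_⟩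
          apply pent_solves
          · linear_combination (-1 : ZMod d) * hT
              - (a 0 * a' 0 * a 6 + a 3 * a' 3 * a' 6) * hw
              - i2 * T * hkey - T * h2i
          · linear_combination (b 1 - a 6 * w) * sqa' 0
          · linear_combination b 2 * sqa' 1
          · linear_combination b 3 * sqa' 2
          · linear_combination (b 4 - a' 6 * w) * sqa' 3
      · -- edge 5 unbalanced : j=5, p=1, q=3
        have hkey := kappa_two (pm_mul (ha 0) (ha' 0)) (pm_mul (ha 2) (ha' 2))
          (ha 5) (ha' 5) (by
            intro h; exact hb5 (by linear_combination h))
        set T : ZMod d := a 0 * a' 0 * b 1 + a 1 * a' 1 * b 2 + a 2 * a' 2 * b 3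
          + a 3 * a' 3 * b 4 - b 0 with hT
        set w : ZMod d := a 5 * (a 0 * a' 0) * (i2 * T) with hw
        refine ⟨![a' 0 * (b 1 - a 5 * w), a' 1 * b 2, a' 2 * (b 3 - a' 5 * w),
          a' 3 * b 4, 0, w, 0, 0, 0, 0], ?_⟩
        apply pent_solves
        · linear_combination (-1 : ZMod d) * hT
            - (a 0 * a' 0 * a 5 + a 2 * a' 2 * a' 5) * hw
            - i2 * T * hkey - T * h2i
        · linear_combination (b 1 - a 5 * w) * sqa' 0
        · linear_combination b 2 * sqa' 1
        · linear_combination (b 3 - a' 5 * w) * sqa' 2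
        · linear_combination b 4 * sqa' 3
    · -- edge 4 unbalanced : j=4, p=1, q=2
      have hkey := kappa_two (pm_mul (ha 0) (ha' 0)) (pm_mul (ha 1) (ha' 1))
        (ha 4) (ha' 4) (by
          intro h; exact hb4 (by linear_combination h))
      set T : ZMod d := a 0 * a' 0 * b 1 + a 1 * a' 1 * b 2 + a 2 * a' 2 * b 3
        + a 3 * a' 3 * b 4 - b 0 with hT
      set w : ZMod d := a 4 * (a 0 * a' 0) * (i2 * T) with hw
      refine ⟨![a' 0 * (b 1 - a 4 * w), a' 1 * (b 2 - a' 4 * w), a' 2 * b 3,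
        a' 3 * b 4, w, 0, 0, 0, 0, 0], ?_⟩
      apply pent_solves
      · linear_combination (-1 : ZMod d) * hT
          - (a 0 * a' 0 * a 4 + a 1 * a' 1 * a' 4) * hw
          - i2 * T * hkey - T * h2i
      · linear_combination (b 1 - a 4 * w) * sqa' 0
      · linear_combination (b 2 - a' 4 * w) * sqa' 1
      · linear_combination b 3 * sqa' 2
      · linear_combination b 4 * sqa' 3
  · rintro ⟨x, hx⟩
    exact classical_to_quantum d hd1 _ b x hx
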